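/- arXiv:2103.05744 — 2 statements merged into one kernel-verified Lean document; each statement's English description precedes it below -/
import Mathlib

section
/- Let M > 0 and suppose φ : [0,1] → ℝ satisfies |φ(s) - s²| ≤ ε for all s ∈ [0,1] and φ is 2-Lipschitz on [0,1]. Define T(x,y) = 2M² (φ(|x+y|/(2M)) - φ(|x|/(2M)) - φ(|y|/(2M))) for x,y ∈ [-M,M]. Then |xy - T(x,y)| ≤ 6M²ε for all x,y ∈ [-M,M], and |T(x,y) - T(x',y')| ≤ 4M(|x-x'| + |y-y'|) for all x,x',y,y' ∈ [-M,M]. -/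
theorem approx_multiplication (M ε : ℝ) (hM : 0 < M) (φ : ℝ → ℝ)
    (happrox : ∀ s ∈ Set.Icc (0:ℝ) 1, |φ s - s^2| ≤ ε)
    (hlip : ∀ s ∈ Set.Icc (0:ℝ) 1, ∀ t ∈ Set.Icc (0:ℝ) 1, |φ s - φ t| ≤ 2 * |s - t|)
    (T : ℝ → ℝ → ℝ)
    (hT : ∀ x y : ℝ, T x y
      = 2*M^2 * (φ (|x+y|/(2*M)) - φ (|x|/(2*M)) - φ (|y|/(2*M)))) :
    (∀ x ∈ Set.Icc (-M) M, ∀ y ∈ Set.Icc (-M) M, |x*y - T x y| ≤ 6*M^2*ε) ∧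
    (∀ x ∈ Set.Icc (-M) M, ∀ x' ∈ Set.Icc (-M) M, ∀ y ∈ Set.Icc (-M) M,
      ∀ y' ∈ Set.Icc (-M) M,
      |T x y - T x' y'| ≤ 4*M*(|x - x'| + |y - y'|)) := by
  have h2M : (0:ℝ) < 2*M := by linarith
  have mem : ∀ z : ℝ, |z| ≤ 2*M → |z|/(2*M) ∈ Set.Icc (0:ℝ) 1 := by
    intro z hz
    constructor
    · positivity
    · rw [div_le_one h2M]; exact hz
  have sqid : ∀ z : ℝ, (|z|/(2*M))^2 = z^2/(4*M^2) := by
    intro z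
    rw [div_pow, sq_abs]
    ring_nf
  constructor
  · intro x hx y hy
    obtain ⟨hx1, hx2⟩ := hx
    obtain ⟨hy1, hy2⟩ := hy
    have hax : |x| ≤ 2*M := by rw [abs_le]; constructor <;> linarith
    have hay : |y| ≤ 2*M := by rw [abs_le]; constructor <;> linarith
    have haxy : |x+y| ≤ 2*M := by
      rw [abs_le]; constructor <;> nlinarith [abs_le.mp hax, abs_le.mp hay]
    set a := |x+y|/(2*M) with ha
    set b := |x|/(2*M) with hb
    set c := |y|/(2*M) with hc
    have ea := happrox a (mem _ haxy)
    have eb := happrox b (mem _ hax)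
    have ec := happrox c (mem _ hay)
    have hxy : 2*M^2 * (a^2 - b^2 - c^2) = x*y := by
      rw [ha, hb, hc, sqid, sqid, sqid]
      field_simp
      ring
    have key : x*y - T x y
        = 2*M^2 * ((φ b - b^2) + (φ c - c^2) - (φ a - a^2)) := by
      rw [hT]; linarith [hxy]
    rw [key, abs_mul, abs_of_pos (by positivity : (0:ℝ) < 2*M^2)]
    have habs : |(φ b - b^2) + (φ c - c^2) - (φ a - a^2)| ≤ 3*ε := by
      have h1 := abs_sub (φ b - b^2 + (φ c - c^2)) (φ a - a^2)
      have h2 := abs_add_le (φ b - b^2) (φ c - c^2)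
      linarith
    nlinarith [sq_nonneg M]
  · intro x hx x' hx' y hy y' hy'
    obtain ⟨hx1, hx2⟩ := hx
    obtain ⟨hx'1, hx'2⟩ := hx'
    obtain ⟨hy1, hy2⟩ := hy
    obtain ⟨hy'1, hy'2⟩ := hy'
    have hax : |x| ≤ 2*M := by rw [abs_le]; constructor <;> linarith
    have hax' : |x'| ≤ 2*M := by rw [abs_le]; constructor <;> linarith
    have hay : |y| ≤ 2*M := by rw [abs_le]; constructor <;> linarith
    have hay' : |y'| ≤ 2*M := by rw [abs_le]; constructor <;> linarith
    have haxy : |x+y| ≤ 2*M := by rw [abs_le]; constructor <;> linarith [abs_le.mp hax, abs_le.mp hay]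
    have haxy' : |x'+y'| ≤ 2*M := by rw [abs_le]; constructor <;> linarith [abs_le.mp hax', abs_le.mp hay']
    have la := hlip _ (mem _ haxy) _ (mem _ haxy')
    have lb := hlip _ (mem _ hax) _ (mem _ hax')
    have lc := hlip _ (mem _ hay) _ (mem _ hay')
    have da : |(|x+y|/(2*M)) - (|x'+y'|/(2*M))| ≤ (|x - x'| + |y - y'|)/(2*M) := by
      rw [div_sub_div_same, abs_div, abs_of_pos h2M, div_le_div_iff_of_pos_right h2M]
      calc |(|x+y|) - (|x'+y'|)| ≤ |(x+y) - (x'+y')| := abs_abs_sub_abs_le_abs_sub _ _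
        _ = |(x - x') + (y - y')| := by rw [show (x+y)-(x'+y') = (x-x')+(y-y') by ring]
        _ ≤ |x - x'| + |y - y'| := abs_add_le _ _
    have db : |(|x|/(2*M)) - (|x'|/(2*M))| ≤ |x - x'|/(2*M) := by
      rw [div_sub_div_same, abs_div, abs_of_pos h2M, div_le_div_iff_of_pos_right h2M]
      exact abs_abs_sub_abs_le_abs_sub _ _
    have dc : |(|y|/(2*M)) - (|y'|/(2*M))| ≤ |y - y'|/(2*M) := by
      rw [div_sub_div_same, abs_div, abs_of_pos h2M, div_le_div_iff_of_pos_right h2M]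
      exact abs_abs_sub_abs_le_abs_sub _ _
    have key : T x y - T x' y'
        = 2*M^2 * ((φ (|x+y|/(2*M)) - φ (|x'+y'|/(2*M)))
            - (φ (|x|/(2*M)) - φ (|x'|/(2*M)))
            - (φ (|y|/(2*M)) - φ (|y'|/(2*M)))) := by
      rw [hT, hT]; ring
    rw [key, abs_mul, abs_of_pos (by positivity : (0:ℝ) < 2*M^2)]
    have habs : |(φ (|x+y|/(2*M)) - φ (|x'+y'|/(2*M)))
            - (φ (|x|/(2*M)) - φ (|x'|/(2*M)))
            - (φ (|y|/(2*M)) - φ (|y'|/(2*M)))|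
        ≤ 2*((|x - x'| + |y - y'|)/(2*M)) + 2*(|x - x'|/(2*M)) + 2*(|y - y'|/(2*M)) := by
      have h1 := abs_sub ((φ (|x+y|/(2*M)) - φ (|x'+y'|/(2*M))) - (φ (|x|/(2*M)) - φ (|x'|/(2*M)))) (φ (|y|/(2*M)) - φ (|y'|/(2*M)))
      have h2 := abs_sub (φ (|x+y|/(2*M)) - φ (|x'+y'|/(2*M))) (φ (|x|/(2*M)) - φ (|x'|/(2*M)))
      linarith
    have hfin : 2*M^2 * (2*((|x - x'| + |y - y'|)/(2*M)) + 2*(|x - x'|/(2*M)) + 2*(|y - y'|/(2*M)))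
        = 4*M*(|x - x'| + |y - y'|) := by
      field_simp
      ring
    calc 2*M^2 * |(φ (|x+y|/(2*M)) - φ (|x'+y'|/(2*M)))
            - (φ (|x|/(2*M)) - φ (|x'|/(2*M)))
            - (φ (|y|/(2*M)) - φ (|y'|/(2*M)))|
        ≤ 2*M^2 * (2*((|x - x'| + |y - y'|)/(2*M)) + 2*(|x - x'|/(2*M)) + 2*(|y - y'|/(2*M))) := by
          apply mul_le_mul_of_nonneg_left habs (by positivity)
      _ = 4*M*(|x - x'| + |y - y'|) := hfin
end

section
/- Let Z = (z₁,…,z_n) be a centered Gaussian vector with coordinate variance σ², and let p ∈ [1,∞). There is a constant C_p depending only on p such that for every α > 0, E(|‖Z‖_∞ - ‖Z‖_∞ · 1_{‖Z‖_∞ ≤ σ√(2 log(2n)) + α}|^p)^{1/p} ≤ σ C_p √(log(2n)) e^{-α²/(4pσ²)}. -/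
open MeasureTheory ProbabilityTheory

open Real Set

/-- pointwise sup bound: `u^(2q) e^{-c u²} ≤ (q/c)^q`. -/
lemma sup_bound {u c q : ℝ} (hu : 0 ≤ u) (hc : 0 < c) (hq : 0 < q) :
    u ^ (2*q) * Real.exp (-c * u^2) ≤ (q/c) ^ q := by
  have hr : 0 ≤ c * u^2 := by positivity
  have h2 : c*u^2/q ≤ Real.exp (c*u^2/q) := by
    have := Real.add_one_le_exp (c*u^2/q); linarith
  have h3 : (c*u^2/q) ^ q ≤ (Real.exp (c*u^2/q)) ^ q :=
    Real.rpow_le_rpow (by positivity) h2 hq.le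
  have h4 : (Real.exp (c*u^2/q)) ^ q = Real.exp (c*u^2) := by
    rw [← Real.exp_mul]; congr 1; field_simp
  have h5 : (c*u^2/q) ^ q = (c*u^2) ^ q / q ^ q := Real.div_rpow hr hq.le q
  have h6 : (c*u^2) ^ q ≤ q ^ q * Real.exp (c*u^2) := by
    rw [h5, h4] at h3
    have hqq : (0:ℝ) < q ^ q := Real.rpow_pos_of_pos hq q
    calc (c*u^2) ^ q = (c*u^2) ^ q / q^q * q^q := by field_simp
    _ ≤ Real.exp (c*u^2) * q^q := by exact mul_le_mul_of_nonneg_right h3 hqq.le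
    _ = q ^ q * Real.exp (c*u^2) := mul_comm _ _
  have h7 : u ^ (2*q) = (c*u^2) ^ q / c ^ q := by
    rw [← Real.div_rpow hr hc.le q, mul_comm c (u^2), mul_div_assoc, div_self hc.ne', mul_one,
      ← Real.rpow_natCast u 2, ← Real.rpow_mul hu]
    norm_num [mul_comm]
  rw [h7, Real.div_rpow hq.le hc.le q]
  rw [div_mul_eq_mul_div, div_le_div_iff_of_pos_right (Real.rpow_pos_of_pos hc q)]
  calc (c*u^2) ^ q * Real.exp (-c * u^2) ≤ q ^ q * Real.exp (c*u^2) * Real.exp (-c*u^2) :=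
        mul_le_mul_of_nonneg_right h6 (Real.exp_pos _).le
  _ = q ^ q := by rw [mul_assoc, ← Real.exp_add]; simp

/-- shift identity for set integrals on `Ioi`. -/
lemma shift_Ioi (g : ℝ → ℝ) (t : ℝ) :
    ∫ x in Ioi t, g (x - t) = ∫ x in Ioi (0:ℝ), g x := by
  rw [← integral_indicator measurableSet_Ioi, ← integral_indicator measurableSet_Ioi]
  have h : ∀ x : ℝ, (Ioi t).indicator (fun x => g (x - t)) x
      = (Ioi (0:ℝ)).indicator g (x - t) := by
    intro x
    by_cases hx : x ∈ Ioi t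
    · rw [indicator_of_mem hx, indicator_of_mem (by simp only [mem_Ioi] at hx ⊢; linarith)]
    · rw [indicator_of_notMem hx,
        indicator_of_notMem (by simp only [mem_Ioi] at hx ⊢; linarith)]
  simp_rw [h, sub_eq_add_neg]
  exact integral_add_right_eq_self ((Ioi (0:ℝ)).indicator g) (-t)

/-- Gaussian tail bound via shifting. -/
lemma tail_bound {b t : ℝ} (hb : 0 < b) (ht : 0 ≤ t) :
    ∫ x in Ioi t, Real.exp (-b * x^2) ≤ Real.exp (-b * t^2) * (Real.sqrt (π/b) / 2) := by
  have hint : Integrable (fun x : ℝ => Real.exp (-b * x^2)) := integrable_exp_neg_mul_sq hb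
  have hint2 : Integrable (fun x : ℝ => Real.exp (-b * t^2) * Real.exp (-b * (x-t)^2)) := by
    have : Integrable (fun x : ℝ => Real.exp (-b * (x-t)^2)) := by
      have := hint.comp_sub_right t
      simpa using this
    exact this.const_mul _
  have hmono : ∫ x in Ioi t, Real.exp (-b * x^2)
      ≤ ∫ x in Ioi t, Real.exp (-b * t^2) * Real.exp (-b * (x-t)^2) := by
    apply setIntegral_mono_on hint.integrableOn hint2.integrableOn measurableSet_Ioi
    intro x hx
    rw [← Real.exp_add]
    apply Real.exp_le_exp.2
    simp only [mem_Ioi] at hx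
    nlinarith [mul_nonneg (mul_nonneg hb.le ht) (sub_nonneg.2 hx.le)]
  calc ∫ x in Ioi t, Real.exp (-b * x^2)
      ≤ ∫ x in Ioi t, Real.exp (-b * t^2) * Real.exp (-b * (x-t)^2) := hmono
  _ = Real.exp (-b * t^2) * ∫ x in Ioi t, Real.exp (-b * (x-t)^2) := by
      rw [integral_const_mul]
  _ = Real.exp (-b * t^2) * ∫ x in Ioi (0:ℝ), Real.exp (-b * x^2) := by
      rw [shift_Ioi (fun x => Real.exp (-b * x^2)) t]
  _ = Real.exp (-b * t^2) * (Real.sqrt (π/b) / 2) := by rw [integral_gaussian_Ioi]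

/-- split an integral of a nonneg function vanishing on `Ioc (-t) t`. -/
lemma split_tails {F : ℝ → ℝ} (t : ℝ) (ht : 0 ≤ t) (hF : Integrable F)
    (hF0 : ∀ x, x ∈ Ioc (-t) t → F x = 0) (hFeven : ∀ x, F (-x) = F x) :
    ∫ x, F x = 2 * ∫ x in Ioi t, F x := by
  have hs : (Iic (-t) ∪ Ioi t)ᶜ = Ioc (-t) t := by
    ext x; simp [mem_Ioc, mem_Iic, mem_Ioi, not_or, not_le, not_lt]
  have h1 : ∫ x, F x = ∫ x in Iic (-t) ∪ Ioi t, F x := by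
    rw [← setIntegral_eq_integral_of_forall_compl_eq_zero (fun x hx => hF0 x (by rwa [← hs]))]
  have hdisj : Disjoint (Iic (-t)) (Ioi t) := by
    rw [Set.disjoint_left]; intro x hx1 hx2
    simp only [mem_Iic, mem_Ioi] at hx1 hx2; linarith
  have h2 : ∫ x in Iic (-t) ∪ Ioi t, F x = (∫ x in Iic (-t), F x) + ∫ x in Ioi t, F x :=
    setIntegral_union hdisj measurableSet_Ioi hF.integrableOn hF.integrableOn
  have h3 : ∫ x in Iic (-t), F x = ∫ x in Ioi t, F x := by
    rw [← integral_comp_neg_Ioi]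
    simp_rw [hFeven]
  rw [h1, h2, h3]; ring

variable {σ : ℝ}

lemma gauss_ne_zero (hσ : 0 < σ) : (⟨σ^2, sq_nonneg σ⟩ : NNReal) ≠ 0 := by
  intro h
  have h2 : σ^2 = 0 := congrArg Subtype.val h
  exact (pow_pos hσ 2).ne' h2

lemma pdf_eq (hσ : 0 < σ) (x : ℝ) :
    gaussianPDFReal 0 ⟨σ^2, sq_nonneg σ⟩ x
      = (Real.sqrt (2*π*σ^2))⁻¹ * Real.exp (-(2*σ^2)⁻¹ * x^2) := by
  simp only [gaussianPDFReal, NNReal.coe_mk, sub_zero]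
  have h : -x^2/(2*σ^2) = -(2*σ^2)⁻¹ * x^2 := by ring
  calc _ = (Real.sqrt (2*π*σ^2))⁻¹ * Real.exp (-x^2/(2*σ^2)) := rfl
    _ = _ := by rw [h]

lemma withDensity_eq (hσ : 0 < σ) :
    gaussianReal 0 ⟨σ^2, sq_nonneg σ⟩
      = volume.withDensity
          (fun x => ((gaussianPDFReal 0 ⟨σ^2, sq_nonneg σ⟩ x).toNNReal : ENNReal)) := by
  rw [gaussianReal_of_var_ne_zero _ (gauss_ne_zero hσ)]
  rfl

lemma integral_gauss (hσ : 0 < σ) (g : ℝ → ℝ) :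
    ∫ x, g x ∂(gaussianReal 0 ⟨σ^2, sq_nonneg σ⟩)
      = ∫ x, gaussianPDFReal 0 ⟨σ^2, sq_nonneg σ⟩ x * g x := by
  rw [withDensity_eq hσ]
  refine (integral_withDensity_eq_integral_smul ((measurable_gaussianPDFReal _ _).real_toNNReal) g).trans ?_
  congr 1; funext x
  simp [NNReal.smul_def, Real.coe_toNNReal _ (gaussianPDFReal_nonneg _ _ x)]
  exact Or.inl (gaussianPDFReal_nonneg _ _ x)

lemma integrable_gauss_iff (hσ : 0 < σ) {g : ℝ → ℝ} (hg : Measurable g) :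
    Integrable g (gaussianReal 0 ⟨σ^2, sq_nonneg σ⟩)
      ↔ Integrable (fun x => g x * gaussianPDFReal 0 ⟨σ^2, sq_nonneg σ⟩ x) volume := by
  rw [withDensity_eq hσ]
  rw [integrable_withDensity_iff (by exact ((measurable_gaussianPDFReal _ _).real_toNNReal).coe_nnreal_ennreal) (by simp)]
  · constructor <;> intro h <;> [skip; skip] <;>
    · apply h.congr
      filter_upwards with x
      simp [Real.coe_toNNReal _ (gaussianPDFReal_nonneg _ _ x)]
      exact Or.inl (gaussianPDFReal_nonneg _ _ x)

noncomputable def phi (q t₀ x : ℝ) : ℝ := (max (|x| - t₀) 0) ^ (2*q)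
noncomputable def psi (T x : ℝ) : ℝ := Set.indicator {y : ℝ | T < |y|} (fun _ => (1:ℝ)) x

lemma phi_nonneg (q t₀ x : ℝ) : 0 ≤ phi q t₀ x := Real.rpow_nonneg (le_max_right _ _) _
lemma psi_nonneg (T x : ℝ) : 0 ≤ psi T x := Set.indicator_nonneg (fun _ _ => zero_le_one) x
lemma psi_le_one (T x : ℝ) : psi T x ≤ 1 :=
  Set.indicator_le_self' (fun _ _ => zero_le_one) x |>.trans (by by_cases h : x ∈ {y : ℝ | T < |y|} <;> simp [psi, Set.indicator_apply, h])

lemma measurable_set_abs (T : ℝ) : MeasurableSet {y : ℝ | T < |y|} :=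
  measurableSet_lt measurable_const _root_.continuous_abs.measurable

lemma measurable_phi (q t₀ : ℝ) (hq : 0 ≤ q) : Measurable (phi q t₀) := by
  have : Continuous fun x : ℝ => max (|x| - t₀) 0 :=
    (_root_.continuous_abs.sub continuous_const).max continuous_const
  exact ((Real.continuous_rpow_const (by positivity)).comp this).measurable

lemma measurable_psi (T : ℝ) : Measurable (psi T) :=
  measurable_const.indicator (measurable_set_abs T)

lemma psi_even (T x : ℝ) : psi T (-x) = psi T x := by
  unfold psi
  by_cases h : x ∈ {y : ℝ | T < |y|}
  · rw [Set.indicator_of_mem h, Set.indicator_of_mem (by simpa using h)]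
  · rw [Set.indicator_of_notMem h, Set.indicator_of_notMem (by simpa using h)]

lemma phi_even (q t₀ x : ℝ) : phi q t₀ (-x) = phi q t₀ x := by unfold phi; rw [abs_neg]

lemma phi_le (q t₀ x : ℝ) (ht₀ : 0 ≤ t₀) (hq : 0 ≤ q) : phi q t₀ x ≤ |x| ^ (2*q) :=
  Real.rpow_le_rpow (le_max_right _ _) (max_le (by linarith [abs_nonneg x]) (abs_nonneg x))
    (by positivity)

lemma integrable_phi_pdf (hσ : 0 < σ) {q t₀ : ℝ} (hq : 0 < q) (ht₀ : 0 ≤ t₀) :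
    Integrable (fun x => phi q t₀ x * gaussianPDFReal 0 ⟨σ^2, sq_nonneg σ⟩ x) volume := by
  set b : ℝ := (2*σ^2)⁻¹ with hbdef
  have hb : 0 < b := by positivity
  set A : ℝ := (Real.sqrt (2*π*σ^2))⁻¹ with hAdef
  have hA : 0 ≤ A := by positivity
  apply Integrable.mono'
    (g := fun x => A * (q/(b/2))^q * Real.exp (-(b/2) * x^2))
    (((integrable_exp_neg_mul_sq (by positivity : (0:ℝ) < b/2)).const_mul _))
    (((measurable_phi q t₀ hq.le).mul (measurable_gaussianPDFReal _ _)).aestronglyMeasurable)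
  filter_upwards with x
  rw [Real.norm_eq_abs, Pi.mul_apply, abs_of_nonneg (mul_nonneg (phi_nonneg q t₀ x) (gaussianPDFReal_nonneg 0 ⟨σ^2, sq_nonneg σ⟩ x)), pdf_eq hσ]
  have h1 : phi q t₀ x * ((Real.sqrt (2*π*σ^2))⁻¹ * Real.exp (-b * x^2))
      ≤ A * (|x| ^ (2*q) * Real.exp (-b * x^2)) := by
    rw [← hAdef]
    have := phi_le q t₀ x ht₀ hq.le
    have h2 : (0:ℝ) ≤ Real.exp (-b * x^2) := (Real.exp_pos _).le
    calc phi q t₀ x * (A * Real.exp (-b*x^2))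
        = A * (phi q t₀ x * Real.exp (-b*x^2)) := by ring
      _ ≤ A * (|x|^(2*q) * Real.exp (-b*x^2)) :=
        mul_le_mul_of_nonneg_left (mul_le_mul_of_nonneg_right this h2) hA
  refine h1.trans ?_
  have h3 : |x| ^ (2*q) * Real.exp (-b * x^2)
      = (|x| ^ (2*q) * Real.exp (-(b/2) * |x|^2)) * Real.exp (-(b/2) * x^2) := by
    rw [mul_assoc, ← Real.exp_add, sq_abs]; ring_nf
  rw [mul_assoc, h3]
  have h4 := sup_bound (abs_nonneg x) (by positivity : (0:ℝ) < b/2) hq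
  have h5 : (0:ℝ) ≤ Real.exp (-(b/2) * x^2) := (Real.exp_pos _).le
  apply mul_le_mul_of_nonneg_left _ hA
  rw [mul_assoc] at *
  nlinarith [Real.rpow_nonneg (abs_nonneg x) (2*q), Real.exp_pos (-(b/2) * x^2)]

lemma integrable_psi_pdf (hσ : 0 < σ) (T : ℝ) :
    Integrable (fun x => psi T x * gaussianPDFReal 0 ⟨σ^2, sq_nonneg σ⟩ x) volume := by
  apply Integrable.mono'
    (g := fun x => (Real.sqrt (2*π*σ^2))⁻¹ * Real.exp (-(2*σ^2)⁻¹ * x^2))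
    ((integrable_exp_neg_mul_sq (by positivity : (0:ℝ) < (2*σ^2)⁻¹)).const_mul _)
    (((measurable_psi T).mul (measurable_gaussianPDFReal _ _)).aestronglyMeasurable)
  filter_upwards with x
  rw [Real.norm_eq_abs, Pi.mul_apply, abs_of_nonneg (mul_nonneg (psi_nonneg T x) (gaussianPDFReal_nonneg 0 ⟨σ^2, sq_nonneg σ⟩ x)), pdf_eq hσ]
  have h1 := psi_le_one T x
  have h2 : 0 ≤ gaussianPDFReal 0 ⟨σ^2, sq_nonneg σ⟩ x := gaussianPDFReal_nonneg _ _ _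
  rw [pdf_eq hσ] at h2
  nlinarith [psi_nonneg T x]

-- L1: moment bound
lemma moment_int_bound (hσ : 0 < σ) {q t₀ : ℝ} (hq : 0 < q) (ht₀ : 0 ≤ t₀) :
    ∫ x, phi q t₀ x * gaussianPDFReal 0 ⟨σ^2, sq_nonneg σ⟩ x
      ≤ 4 * (4*q)^q * σ^(2*q) * Real.exp (-(2*σ^2)⁻¹ * t₀^2) := by
  set b : ℝ := (2*σ^2)⁻¹ with hbdef
  have hb : 0 < b := by positivity
  set A : ℝ := (Real.sqrt (2*π*σ^2))⁻¹ with hAdef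
  have hA : 0 ≤ A := by positivity
  set F : ℝ → ℝ := fun x => phi q t₀ x * gaussianPDFReal 0 ⟨σ^2, sq_nonneg σ⟩ x with hFdef
  have hF : Integrable F := integrable_phi_pdf hσ hq ht₀
  have hsplit : ∫ x, F x = 2 * ∫ x in Ioi t₀, F x := by
    apply split_tails t₀ ht₀ hF
    · intro x hx
      have hx' : |x| ≤ t₀ := abs_le.2 ⟨hx.1.le, hx.2⟩
      have : max (|x| - t₀) 0 = 0 := max_eq_right (by linarith)
      simp only [hFdef, phi, this]
      rw [Real.zero_rpow (by positivity)]
      ring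
    · intro x
      simp only [hFdef, phi_even]
      congr 1
      rw [pdf_eq hσ, pdf_eq hσ, neg_sq]
  -- pointwise bound on the tail
  have hptwise : ∀ x ∈ Ioi t₀,
      F x ≤ A * ((4*q*σ^2)^q * (Real.exp (-b * t₀^2) * Real.exp (-(b/2) * (x-t₀)^2))) := by
    intro x hx
    rw [mem_Ioi] at hx
    have hxt : 0 ≤ x - t₀ := by linarith
    have habs : |x| = x := abs_of_nonneg (by linarith)
    have hphi : phi q t₀ x = (x - t₀) ^ (2*q) := by
      simp only [phi, habs, max_eq_left hxt]
    rw [hFdef]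
    simp only
    rw [hphi, pdf_eq hσ, ← hbdef]
    have h1 : Real.exp (-b * x^2) ≤ Real.exp (-b * t₀^2) * Real.exp (-b * (x-t₀)^2) := by
      rw [← Real.exp_add]
      apply Real.exp_le_exp.2
      nlinarith [mul_nonneg (mul_nonneg hb.le ht₀) hxt]
    have h2 : (x - t₀) ^ (2*q) * Real.exp (-b * (x-t₀)^2)
        ≤ (4*q*σ^2)^q * Real.exp (-(b/2) * (x-t₀)^2) := by
      have h3 : Real.exp (-b * (x-t₀)^2)
          = Real.exp (-(b/2) * (x-t₀)^2) * Real.exp (-(b/2) * (x-t₀)^2) := by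
        rw [← Real.exp_add]; ring_nf
      have h4 := sup_bound hxt (by positivity : (0:ℝ) < b/2) hq
      have h5 : q / (b/2) = 4*q*σ^2 := by
        rw [hbdef]; field_simp; ring
      rw [h3, ← mul_assoc]
      apply mul_le_mul_of_nonneg_right _ (Real.exp_pos _).le
      rw [← h5]; exact h4
    calc (x - t₀) ^ (2*q) * (A * Real.exp (-b * x^2))
        = A * ((x - t₀) ^ (2*q) * Real.exp (-b * x^2)) := by ring
      _ ≤ A * ((x - t₀) ^ (2*q) * (Real.exp (-b * t₀^2) * Real.exp (-b * (x-t₀)^2))) := by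
          apply mul_le_mul_of_nonneg_left _ hA
          exact mul_le_mul_of_nonneg_left h1 (Real.rpow_nonneg hxt _)
      _ = Real.exp (-b * t₀^2) * ((x - t₀) ^ (2*q) * Real.exp (-b * (x-t₀)^2)) * A := by ring
      _ ≤ Real.exp (-b * t₀^2) * ((4*q*σ^2)^q * Real.exp (-(b/2) * (x-t₀)^2)) * A := by
          apply mul_le_mul_of_nonneg_right _ hA
          exact mul_le_mul_of_nonneg_left h2 (Real.exp_pos _).le
      _ = A * ((4*q*σ^2)^q * (Real.exp (-b * t₀^2) * Real.exp (-(b/2) * (x-t₀)^2))) := by ring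
  have hint2 : Integrable (fun x : ℝ =>
      A * ((4*q*σ^2)^q * (Real.exp (-b * t₀^2) * Real.exp (-(b/2) * (x-t₀)^2)))) := by
    have : Integrable (fun x : ℝ => Real.exp (-(b/2) * (x-t₀)^2)) := by
      simpa using (integrable_exp_neg_mul_sq (by positivity : (0:ℝ) < b/2)).comp_sub_right t₀
    exact ((this.const_mul _).const_mul _).const_mul _
  have htail : ∫ x in Ioi t₀, F x
      ≤ A * ((4*q*σ^2)^q * (Real.exp (-b * t₀^2) * (σ * Real.sqrt π))) := by
    calc ∫ x in Ioi t₀, F x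
        ≤ ∫ x in Ioi t₀, A * ((4*q*σ^2)^q * (Real.exp (-b * t₀^2) * Real.exp (-(b/2) * (x-t₀)^2))) :=
          setIntegral_mono_on hF.integrableOn hint2.integrableOn measurableSet_Ioi hptwise
      _ = A * ((4*q*σ^2)^q * (Real.exp (-b * t₀^2) * ∫ x in Ioi t₀, Real.exp (-(b/2) * (x-t₀)^2))) := by
          rw [integral_const_mul, integral_const_mul, integral_const_mul]
      _ = A * ((4*q*σ^2)^q * (Real.exp (-b * t₀^2) * (σ * Real.sqrt π))) := by
          rw [shift_Ioi (fun x => Real.exp (-(b/2) * x^2)) t₀, integral_gaussian_Ioi]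
          congr 3
          rw [hbdef]
          rw [show π / ((2*σ^2)⁻¹/2) = 4*π*σ^2 by field_simp; ring]
          rw [show (4:ℝ)*π*σ^2 = (2*σ)^2 * π by ring, Real.sqrt_mul (sq_nonneg _),
            Real.sqrt_sq (by positivity)]
          ring
  -- assemble
  rw [hsplit]
  have hAle : A * σ ≤ 1 := by
    rw [hAdef]
    have h6 : σ ≤ Real.sqrt (2*π*σ^2) := by
      rw [show (2:ℝ)*π*σ^2 = σ^2 * (2*π) by ring, Real.sqrt_mul (sq_nonneg _),
        Real.sqrt_sq hσ.le]
      nlinarith [Real.sqrt_le_sqrt (by linarith [Real.pi_gt_three] : (1:ℝ) ≤ 2*π),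
        Real.sqrt_one, hσ.le, Real.sqrt_nonneg (2*π)]
    rw [inv_mul_le_iff₀ (by positivity), mul_one]
    exact h6
  have hqq : (4*q*σ^2)^q = (4*q)^q * σ^(2*q) := by
    rw [show (4:ℝ)*q*σ^2 = (4*q) * σ^2 by ring,
      Real.mul_rpow (by positivity) (sq_nonneg σ), ← Real.rpow_natCast σ 2,
      ← Real.rpow_mul hσ.le]
    norm_num
  have hsqrtpi : Real.sqrt π ≤ 2 := by
    nlinarith [Real.sq_sqrt Real.pi_pos.le, Real.sqrt_nonneg π, Real.pi_lt_d2]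
  calc 2 * ∫ x in Ioi t₀, F x
      ≤ 2 * (A * ((4*q*σ^2)^q * (Real.exp (-b * t₀^2) * (σ * Real.sqrt π)))) := by linarith
    _ = (A * σ) * Real.sqrt π * 2 * ((4*q)^q * σ^(2*q)) * Real.exp (-b * t₀^2) := by
        rw [hqq]; ring
    _ ≤ 1 * 2 * 2 * ((4*q)^q * σ^(2*q)) * Real.exp (-b * t₀^2) := by
        have e1 : (0:ℝ) < (4*q)^q * σ^(2*q) := by
          have := Real.rpow_pos_of_pos (by positivity : (0:ℝ) < 4*q) q
          have := Real.rpow_pos_of_pos hσ (2*q)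
          positivity
        have e2 : (0:ℝ) < Real.exp (-b * t₀^2) := Real.exp_pos _
        have e3 : (A*σ) * Real.sqrt π * 2 ≤ 1 * 2 * 2 := by
          have hAσ : 0 ≤ A * σ := by positivity
          nlinarith [Real.sqrt_nonneg π]
        exact mul_le_mul_of_nonneg_right (mul_le_mul_of_nonneg_right e3 e1.le) e2.le
    _ = 4 * (4*q)^q * σ^(2*q) * Real.exp (-(2*σ^2)⁻¹ * t₀^2) := by rw [← hbdef]; ring

-- L2: tail probability bound
lemma psi_int_bound (hσ : 0 < σ) {T : ℝ} (hT : 0 ≤ T) :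
    ∫ x, psi T x * gaussianPDFReal 0 ⟨σ^2, sq_nonneg σ⟩ x
      ≤ Real.exp (-(2*σ^2)⁻¹ * T^2) := by
  set b : ℝ := (2*σ^2)⁻¹ with hbdef
  have hb : 0 < b := by positivity
  set A : ℝ := (Real.sqrt (2*π*σ^2))⁻¹ with hAdef
  have hA : 0 ≤ A := by positivity
  set F : ℝ → ℝ := fun x => psi T x * gaussianPDFReal 0 ⟨σ^2, sq_nonneg σ⟩ x with hFdef
  have hF : Integrable F := integrable_psi_pdf hσ T
  have hsplit : ∫ x, F x = 2 * ∫ x in Ioi T, F x := by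
    apply split_tails T hT hF
    · intro x hx
      have hx' : ¬ (T < |x|) := not_lt.2 (abs_le.2 ⟨hx.1.le, hx.2⟩)
      simp only [hFdef, psi]
      rw [Set.indicator_of_notMem (s := {y : ℝ | T < |y|}) (by simpa using hx')]
      ring
    · intro x
      simp only [hFdef, psi_even]
      congr 1
      rw [pdf_eq hσ, pdf_eq hσ, neg_sq]
  have hptwise : ∀ x ∈ Ioi T, F x ≤ A * Real.exp (-b * x^2) := by
    intro x hx
    rw [mem_Ioi] at hx
    rw [hFdef]
    simp only
    rw [pdf_eq hσ, ← hbdef, ← hAdef]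
    have h1 := psi_le_one T x
    calc psi T x * (A * Real.exp (-b * x^2)) ≤ 1 * (A * Real.exp (-b * x^2)) :=
          mul_le_mul_of_nonneg_right h1 (by positivity)
      _ = A * Real.exp (-b * x^2) := one_mul _
  have hint2 : Integrable (fun x : ℝ => A * Real.exp (-b * x^2)) :=
    (integrable_exp_neg_mul_sq hb).const_mul _
  have htail : ∫ x in Ioi T, F x ≤ A * (Real.exp (-b * T^2) * (Real.sqrt (π/b) / 2)) := by
    calc ∫ x in Ioi T, F x ≤ ∫ x in Ioi T, A * Real.exp (-b * x^2) :=
          setIntegral_mono_on hF.integrableOn hint2.integrableOn measurableSet_Ioi hptwise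
      _ = A * ∫ x in Ioi T, Real.exp (-b * x^2) := integral_const_mul _ _
      _ ≤ A * (Real.exp (-b * T^2) * (Real.sqrt (π/b) / 2)) :=
          mul_le_mul_of_nonneg_left (tail_bound hb hT) hA
  have hkey : A * Real.sqrt (π/b) = 1 := by
    rw [hAdef, hbdef, show π / (2*σ^2)⁻¹ = 2*π*σ^2 by field_simp]
    rw [inv_mul_cancel₀ (by positivity)]
  rw [hsplit]
  calc 2 * ∫ x in Ioi T, F x ≤ 2 * (A * (Real.exp (-b * T^2) * (Real.sqrt (π/b) / 2))) := by
        linarith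
    _ = (A * Real.sqrt (π/b)) * Real.exp (-b * T^2) := by ring
    _ = Real.exp (-(2*σ^2)⁻¹ * T^2) := by rw [hkey, one_mul, hbdef]


lemma exists_eq_norm {n : ℕ} (hn : 0 < n) (x : Fin n → ℝ) : ∃ i, ‖x‖ = |x i| := by
  have : Nonempty (Fin n) := Fin.pos_iff_nonempty.mp hn
  have hne : (Finset.univ : Finset (Fin n)).Nonempty := Finset.univ_nonempty
  obtain ⟨i, _, hi⟩ := Finset.exists_mem_eq_sup Finset.univ hne (fun i => ‖x i‖₊)
  refine ⟨i, ?_⟩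
  rw [Pi.norm_def, hi]
  exact (coe_nnnorm _).trans (Real.norm_eq_abs _)

lemma amgm {a K : ℝ} (ha : 0 ≤ a) (hK : 0 < K) : a ≤ a^2/(2*K) + K/2 := by
  have h := sq_nonneg (a - K)
  rw [div_add_div _ _ (by positivity) (by norm_num : (2:ℝ) ≠ 0), le_div_iff₀ (by positivity)]
  nlinarith

set_option maxHeartbeats 1600000 in
theorem gaussian_maxnorm_truncation_Lp (p : ℝ) (hp : 1 ≤ p) :
    ∃ C : ℝ, 0 < C ∧
      ∀ (n : ℕ), 0 < n →
      ∀ (Ω : Type) (_ : MeasurableSpace Ω) (P : Measure Ω),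
        IsProbabilityMeasure P →
      ∀ (σ : ℝ), 0 < σ →
      ∀ (Z : Ω → (Fin n → ℝ)), Measurable Z →
      (∀ i : Fin n,
        P.map (fun ω => Z ω i) = gaussianReal 0 ⟨σ^2, sq_nonneg σ⟩) →
      ∀ (α : ℝ), 0 < α →
      (∫ ω, |‖Z ω‖ - ‖Z ω‖ *
          Set.indicator {ω' | ‖Z ω'‖ ≤ σ * Real.sqrt (2 * Real.log (2*n)) + α}
            (fun _ => (1:ℝ)) ω|^p ∂P)^(1/p)
        ≤ σ * C * Real.sqrt (Real.log (2*n)) * Real.exp (-α^2 / (4*p*σ^2)) := by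
  have hp0 : 0 < p := lt_of_lt_of_le one_pos hp
  have hlog2 : (0:ℝ) < Real.log 2 := Real.log_pos one_lt_two
  have h2p : (0:ℝ) < (2:ℝ)^(2*p) := Real.rpow_pos_of_pos two_pos _
  have h4p : (0:ℝ) < (4*p)^p := Real.rpow_pos_of_pos (by positivity) _
  have hl2p : (0:ℝ) < (Real.log 2)^p := Real.rpow_pos_of_pos hlog2 _
  set D : ℝ := (2:ℝ)^p + 2 * (4*p)^p / (Real.log 2)^p with hDdef
  have hD : 0 < D := by
    have := Real.rpow_pos_of_pos (two_pos (α := ℝ)) p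
    positivity
  set C : ℝ := 1 + (2:ℝ)^(2*p) * D / 2 + 1/4 with hCdef
  have hC1 : 1 ≤ C := by
    have h0 : 0 ≤ (2:ℝ)^(2*p) * D / 2 := by positivity
    rw [hCdef]; linarith
  refine ⟨C, by positivity, ?_⟩
  intro n hn Ω mΩ P hP σ hσ Z hZmeas hZcoord α hα
  -- notation
  set Lg : ℝ := Real.log (2*(n:ℝ)) with hLgdef
  have h2n : (0:ℝ) < 2*(n:ℝ) := by positivity
  have hLg2 : Real.log 2 ≤ Lg := by
    apply Real.log_le_log two_pos
    have : (1:ℝ) ≤ (n:ℝ) := by exact_mod_cast hn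
    linarith
  have hLg : 0 < Lg := lt_of_lt_of_le hlog2 hLg2
  set L : ℝ := Real.sqrt Lg with hLdef
  have hL : 0 < L := Real.sqrt_pos.2 hLg
  have hLsq : L^2 = Lg := Real.sq_sqrt hLg.le
  set t₀ : ℝ := σ * Real.sqrt (2*Lg) with ht₀def
  have ht₀ : 0 < t₀ := by
    have : 0 < Real.sqrt (2*Lg) := Real.sqrt_pos.2 (by linarith)
    positivity
  set T : ℝ := t₀ + α with hTdef
  have hT : 0 < T := by rw [hTdef]; linarith
  have ht₀sq : t₀^2 = σ^2 * (2*Lg) := by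
    rw [ht₀def, mul_pow, Real.sq_sqrt (by linarith : (0:ℝ) ≤ 2*Lg)]
  have hexp_t₀ : Real.exp (-(2*σ^2)⁻¹ * t₀^2) = (2*(n:ℝ))⁻¹ := by
    rw [ht₀sq, show -(2*σ^2)⁻¹ * (σ^2 * (2*Lg)) = -Lg by field_simp]
    rw [Real.exp_neg, hLgdef, Real.exp_log h2n]
  have hexp_T : Real.exp (-(2*σ^2)⁻¹ * T^2)
      ≤ (2*(n:ℝ))⁻¹ * Real.exp (-α^2/(2*σ^2)) := by
    rw [← hexp_t₀, ← Real.exp_add]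
    apply Real.exp_le_exp.2
    rw [hTdef]
    have h1 : -(2*σ^2)⁻¹ * t₀^2 + -α^2/(2*σ^2) = -(2*σ^2)⁻¹ * (t₀^2 + α^2) := by
      field_simp; ring
    rw [h1]
    have h2 : t₀^2 + α^2 ≤ (t₀+α)^2 := by nlinarith
    have h3 : (0:ℝ) < (2*σ^2)⁻¹ := by positivity
    nlinarith
  set X : Ω → ℝ := fun ω => ‖Z ω‖ with hXdef
  have hXmeas : Measurable X := hZmeas.norm
  have hXnn : ∀ ω, 0 ≤ X ω := fun ω => norm_nonneg _
  set E : ℝ := Real.exp (α^2/(4*σ^2)) with hEdef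
  have hE : 0 < E := Real.exp_pos _
  set S : ℝ := σ^p * L^p with hSdef
  have hσp : (0:ℝ) < σ^p := Real.rpow_pos_of_pos hσ _
  have hLp : (0:ℝ) < L^p := Real.rpow_pos_of_pos hL _
  have hS : 0 < S := mul_pos hσp hLp
  set K : ℝ := S * E with hKdef
  have hK : 0 < K := mul_pos hS hE
  have hZi : ∀ i : Fin n, Measurable (fun ω => Z ω i) :=
    fun i => (measurable_pi_apply i).comp hZmeas
  -- pointwise bound
  set G : Ω → ℝ := fun ω =>
    (2:ℝ)^(2*p)/(2*K) * (t₀^(2*p) + ∑ i, phi p t₀ (Z ω i))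
      + K/2 * ∑ i, psi T (Z ω i) with hGdef
  have hsum_phi_nn : ∀ ω, (0:ℝ) ≤ ∑ i, phi p t₀ (Z ω i) :=
    fun ω => Finset.sum_nonneg fun i _ => phi_nonneg _ _ _
  have hsum_psi_nn : ∀ ω, (0:ℝ) ≤ ∑ i, psi T (Z ω i) :=
    fun ω => Finset.sum_nonneg fun i _ => psi_nonneg _ _
  have ht₀2p : (0:ℝ) ≤ t₀^(2*p) := Real.rpow_nonneg ht₀.le _
  have hGnn : ∀ ω, 0 ≤ G ω := by
    intro ω
    apply add_nonneg
    · exact mul_nonneg (by positivity) (add_nonneg ht₀2p (hsum_phi_nn ω))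
    · exact mul_nonneg (by positivity) (hsum_psi_nn ω)
  have hpt : ∀ ω, |‖Z ω‖ - ‖Z ω‖ *
      Set.indicator {ω' | ‖Z ω'‖ ≤ T}
        (fun _ => (1:ℝ)) ω|^p ≤ G ω := by
    intro ω
    by_cases hA : ω ∈ {ω' | ‖Z ω'‖ ≤ T}
    · rw [Set.indicator_of_mem hA, mul_one, sub_self, abs_zero,
        Real.zero_rpow hp0.ne']
      exact hGnn ω
    · rw [Set.indicator_of_notMem hA, mul_zero, sub_zero,
        abs_of_nonneg (hXnn ω)]
      show X ω ^ p ≤ G ω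
      have hAT : T < X ω := by
        simp only [mem_setOf_eq, not_le] at hA
        exact hA
      obtain ⟨i₀, hi₀⟩ := exists_eq_norm hn (Z ω)
      -- key 2 : 1 ≤ ∑ ψ
      have hkey2 : (1:ℝ) ≤ ∑ i, psi T (Z ω i) := by
        have h1 : psi T (Z ω i₀) = 1 := by
          rw [psi, Set.indicator_of_mem]
          rw [mem_setOf_eq, ← hi₀]
          exact hAT
        calc (1:ℝ) = psi T (Z ω i₀) := h1.symm
          _ ≤ ∑ i, psi T (Z ω i) :=
            Finset.single_le_sum (fun i _ => psi_nonneg _ _) (Finset.mem_univ i₀)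
      -- key 1 : X^{2p} ≤ 2^{2p} (t₀^{2p} + ∑ φ)
      have hkey1 : X ω ^ (2*p) ≤ (2:ℝ)^(2*p) * (t₀^(2*p) + ∑ i, phi p t₀ (Z ω i)) := by
        set m : ℝ := max (X ω - t₀) 0 with hmdef
        have hm : 0 ≤ m := le_max_right _ _
        have hXle : X ω ≤ 2 * max t₀ m := by
          have h1 : X ω ≤ t₀ + m := by
            rcases le_total (X ω) t₀ with h | h
            · linarith [hm]
            · have : X ω - t₀ ≤ m := le_max_left _ _
              linarith
          have h2 : t₀ ≤ max t₀ m := le_max_left _ _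
          have h3 : m ≤ max t₀ m := le_max_right _ _
          linarith
        have hmax_nn : 0 ≤ max t₀ m := le_trans ht₀.le (le_max_left _ _)
        have h4 : X ω ^ (2*p) ≤ (2 * max t₀ m) ^ (2*p) :=
          Real.rpow_le_rpow (hXnn ω) hXle (by positivity)
        have h5 : (2 * max t₀ m) ^ (2*p) = (2:ℝ)^(2*p) * (max t₀ m)^(2*p) :=
          Real.mul_rpow (by norm_num) hmax_nn
        have h6 : (max t₀ m)^(2*p) ≤ t₀^(2*p) + m^(2*p) := by
          rcases max_cases t₀ m with ⟨heq, _⟩ | ⟨heq, _⟩ <;> rw [heq]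
          · have : (0:ℝ) ≤ m^(2*p) := Real.rpow_nonneg hm _
            linarith
          · linarith [ht₀2p]
        have h7 : m^(2*p) ≤ ∑ i, phi p t₀ (Z ω i) := by
          have : m^(2*p) = phi p t₀ (Z ω i₀) := by
            rw [phi, hmdef, hXdef]
            simp only
            rw [hi₀]
          rw [this]
          exact Finset.single_le_sum (fun i _ => phi_nonneg _ _ _) (Finset.mem_univ i₀)
        calc X ω ^ (2*p) ≤ (2:ℝ)^(2*p) * (max t₀ m)^(2*p) := by rw [← h5]; exact h4
          _ ≤ (2:ℝ)^(2*p) * (t₀^(2*p) + m^(2*p)) :=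
              mul_le_mul_of_nonneg_left h6 h2p.le
          _ ≤ (2:ℝ)^(2*p) * (t₀^(2*p) + ∑ i, phi p t₀ (Z ω i)) := by
              apply mul_le_mul_of_nonneg_left _ h2p.le
              linarith
      -- AM-GM
      have hsq : X ω ^ (2*p) = (X ω ^ p)^2 := by
        rw [show (2:ℝ)*p = p*2 by ring, Real.rpow_mul (hXnn ω), Real.rpow_two]
      have hamgm : X ω ^ p ≤ X ω ^ (2*p) / (2*K) + K/2 := by
        rw [hsq]
        exact amgm (Real.rpow_nonneg (hXnn ω) p) hK
      calc X ω ^ p ≤ X ω ^ (2*p) / (2*K) + K/2 := hamgm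
        _ ≤ (2:ℝ)^(2*p) * (t₀^(2*p) + ∑ i, phi p t₀ (Z ω i)) / (2*K)
              + K/2 * ∑ i, psi T (Z ω i) := by
            apply add_le_add
            · exact (div_le_div_iff_of_pos_right (by positivity)).2 hkey1
            · exact le_mul_of_one_le_right (by positivity) hkey2
        _ = G ω := by rw [hGdef]; ring
  -- integrability per coordinate
  have hbint : ∀ i : Fin n, Integrable (fun ω => phi p t₀ (Z ω i)) P := by
    intro i
    have h1 : Integrable (phi p t₀) (P.map (fun ω => Z ω i)) := by
      rw [hZcoord i, integrable_gauss_iff hσ (measurable_phi p t₀ hp0.le)]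
      exact integrable_phi_pdf hσ hp0 ht₀.le
    have h2 := (integrable_map_measure (measurable_phi p t₀ hp0.le).aestronglyMeasurable
      (hZi i).aemeasurable).mp h1
    exact h2
  have hsint : ∀ i : Fin n, Integrable (fun ω => psi T (Z ω i)) P := by
    intro i
    have h1 : Integrable (psi T) (P.map (fun ω => Z ω i)) := by
      rw [hZcoord i, integrable_gauss_iff hσ (measurable_psi T)]
      exact integrable_psi_pdf hσ T
    have h2 := (integrable_map_measure (measurable_psi T).aestronglyMeasurable
      (hZi i).aemeasurable).mp h1
    exact h2
  -- per-coordinate integral bounds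
  have hphi_le : ∀ i : Fin n, ∫ ω, phi p t₀ (Z ω i) ∂P
      ≤ 4*(4*p)^p * σ^(2*p) * (2*(n:ℝ))⁻¹ := by
    intro i
    have h1 : ∫ ω, phi p t₀ (Z ω i) ∂P = ∫ x, phi p t₀ x ∂(P.map (fun ω => Z ω i)) :=
      (integral_map (hZi i).aemeasurable
        (measurable_phi p t₀ hp0.le).aestronglyMeasurable).symm
    rw [h1, hZcoord i, integral_gauss hσ]
    have h2 : ∫ x, gaussianPDFReal 0 ⟨σ^2, sq_nonneg σ⟩ x * phi p t₀ x
        = ∫ x, phi p t₀ x * gaussianPDFReal 0 ⟨σ^2, sq_nonneg σ⟩ x := by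
      congr 1; funext x; ring
    rw [h2]
    calc ∫ x, phi p t₀ x * gaussianPDFReal 0 ⟨σ^2, sq_nonneg σ⟩ x
        ≤ 4*(4*p)^p * σ^(2*p) * Real.exp (-(2*σ^2)⁻¹ * t₀^2) :=
          moment_int_bound hσ hp0 ht₀.le
      _ = 4*(4*p)^p * σ^(2*p) * (2*(n:ℝ))⁻¹ := by rw [hexp_t₀]
  have hpsi_le : ∀ i : Fin n, ∫ ω, psi T (Z ω i) ∂P
      ≤ (2*(n:ℝ))⁻¹ * Real.exp (-α^2/(2*σ^2)) := by
    intro i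
    have h1 : ∫ ω, psi T (Z ω i) ∂P = ∫ x, psi T x ∂(P.map (fun ω => Z ω i)) :=
      (integral_map (hZi i).aemeasurable (measurable_psi T).aestronglyMeasurable).symm
    rw [h1, hZcoord i, integral_gauss hσ]
    have h2 : ∫ x, gaussianPDFReal 0 ⟨σ^2, sq_nonneg σ⟩ x * psi T x
        = ∫ x, psi T x * gaussianPDFReal 0 ⟨σ^2, sq_nonneg σ⟩ x := by
      congr 1; funext x; ring
    rw [h2]
    exact (psi_int_bound hσ hT.le).trans hexp_T
  -- integrable G and integral identity
  have hint1 : Integrable (fun ω => t₀^(2*p) + ∑ i, phi p t₀ (Z ω i)) P :=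
    (integrable_const _).add (integrable_finset_sum _ fun i _ => hbint i)
  have hint2 : Integrable (fun ω => ∑ i, psi T (Z ω i)) P :=
    integrable_finset_sum _ fun i _ => hsint i
  have hGint : Integrable G P := (hint1.const_mul _).add (hint2.const_mul _)
  have hGeq : ∫ ω, G ω ∂P
      = (2:ℝ)^(2*p)/(2*K) * (t₀^(2*p) + ∑ i, ∫ ω, phi p t₀ (Z ω i) ∂P)
        + K/2 * ∑ i, ∫ ω, psi T (Z ω i) ∂P := by
    rw [hGdef]
    rw [integral_add (hint1.const_mul _) (hint2.const_mul _),
      integral_const_mul, integral_const_mul,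
      integral_add (integrable_const _) (integrable_finset_sum _ fun i _ => hbint i),
      integral_const, integral_finset_sum _ fun i _ => hbint i,
      integral_finset_sum _ fun i _ => hsint i]
    simp [measure_univ]
  -- sums
  have hncast : ((n:ℝ)) ≠ 0 := Nat.cast_ne_zero.2 hn.ne'
  have hsum1 : ∑ i, ∫ ω, phi p t₀ (Z ω i) ∂P ≤ 2*(4*p)^p*σ^(2*p) := by
    calc ∑ i, ∫ ω, phi p t₀ (Z ω i) ∂P
        ≤ ∑ _i : Fin n, 4*(4*p)^p * σ^(2*p) * (2*(n:ℝ))⁻¹ :=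
          Finset.sum_le_sum fun i _ => hphi_le i
      _ = (n:ℝ) * (4*(4*p)^p * σ^(2*p) * (2*(n:ℝ))⁻¹) := by
          rw [Finset.sum_const, Finset.card_univ, Fintype.card_fin, nsmul_eq_mul]
      _ = 2*(4*p)^p*σ^(2*p) := by field_simp; ring
  have hsum2 : ∑ i, ∫ ω, psi T (Z ω i) ∂P ≤ Real.exp (-α^2/(2*σ^2))/2 := by
    calc ∑ i, ∫ ω, psi T (Z ω i) ∂P
        ≤ ∑ _i : Fin n, (2*(n:ℝ))⁻¹ * Real.exp (-α^2/(2*σ^2)) :=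
          Finset.sum_le_sum fun i _ => hpsi_le i
      _ = (n:ℝ) * ((2*(n:ℝ))⁻¹ * Real.exp (-α^2/(2*σ^2))) := by
          rw [Finset.sum_const, Finset.card_univ, Fintype.card_fin, nsmul_eq_mul]
      _ = Real.exp (-α^2/(2*σ^2))/2 := by field_simp
  -- algebraic identities
  have hσ2p : σ^(2*p) = (σ^p)^2 := by
    rw [show (2:ℝ)*p = p*2 by ring, Real.rpow_mul hσ.le, Real.rpow_two]
  have hLgp : Lg^p = (L^p)^2 := by
    have e1 : ((L^2:ℝ))^p = L^(2*p) := by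
      rw [← Real.rpow_natCast L 2, ← Real.rpow_mul hL.le]; norm_num
    have e2 : L^(2*p) = (L^p)^2 := by
      rw [show (2:ℝ)*p = p*2 by ring, Real.rpow_mul hL.le, Real.rpow_two]
    rw [← hLsq, e1, e2]
  have ht₀2p_eq : t₀^(2*p) = 2^p * σ^(2*p) * Lg^p := by
    have h1 : t₀^(2*p) = (t₀^2)^p := by
      rw [← Real.rpow_natCast t₀ 2, ← Real.rpow_mul ht₀.le]
      norm_num
    rw [h1, ht₀sq, show σ^2 * (2*Lg) = 2 * (σ^2 * Lg) by ring,
      Real.mul_rpow (by norm_num) (by positivity),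
      Real.mul_rpow (sq_nonneg σ) hLg.le,
      show ((σ^2)^p : ℝ) = σ^(2*p) by
        rw [← Real.rpow_natCast σ 2, ← Real.rpow_mul hσ.le]; norm_num]
    ring
  have hLgp_ge : (Real.log 2)^p ≤ Lg^p := Real.rpow_le_rpow hlog2.le hLg2 hp0.le
  have hM : t₀^(2*p) + 2*(4*p)^p*σ^(2*p) ≤ D * S^2 := by
    have e1 : t₀^(2*p) = 2^p * S^2 := by
      rw [ht₀2p_eq, hSdef, hσ2p, hLgp]; ring
    have e2 : 2*(4*p)^p*σ^(2*p) ≤ (2*(4*p)^p/(Real.log 2)^p) * S^2 := by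
      rw [hSdef, hσ2p, div_mul_eq_mul_div, le_div_iff₀ hl2p]
      have h3 : (0:ℝ) ≤ 2*(4*p)^p*(σ^p)^2 := by positivity
      calc 2*(4*p)^p*(σ^p)^2 * (Real.log 2)^p
          ≤ 2*(4*p)^p*(σ^p)^2 * Lg^p := by
            apply mul_le_mul_of_nonneg_left hLgp_ge h3
        _ = 2*(4*p)^p * ((σ^p * L^p)^2) := by rw [hLgp]; ring
    have e3 : D * S^2 = 2^p * S^2 + (2*(4*p)^p/(Real.log 2)^p) * S^2 := by
      rw [hDdef]; ring
    rw [e3, e1]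
    linarith
  -- final arithmetic
  have hEinv : E⁻¹ = Real.exp (-α^2/(4*σ^2)) := by
    rw [hEdef, ← Real.exp_neg]
    congr 1
    field_simp
  have hEmul : E * Real.exp (-α^2/(2*σ^2)) = Real.exp (-α^2/(4*σ^2)) := by
    rw [hEdef, ← Real.exp_add]
    congr 1
    field_simp
    ring
  have hexp4 : (0:ℝ) < Real.exp (-α^2/(4*σ^2)) := Real.exp_pos _
  have hGle : ∫ ω, G ω ∂P ≤ C * S * Real.exp (-α^2/(4*σ^2)) := by
    rw [hGeq]
    have b1 : (2:ℝ)^(2*p)/(2*K) * (t₀^(2*p) + ∑ i, ∫ ω, phi p t₀ (Z ω i) ∂P)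
        ≤ (2:ℝ)^(2*p)/(2*K) * (D * S^2) := by
      apply mul_le_mul_of_nonneg_left _ (by positivity)
      linarith [hM, hsum1]
    have b2 : K/2 * ∑ i, ∫ ω, psi T (Z ω i) ∂P
        ≤ K/2 * (Real.exp (-α^2/(2*σ^2))/2) := by
      apply mul_le_mul_of_nonneg_left hsum2 (by positivity)
    have c1 : (2:ℝ)^(2*p)/(2*K) * (D * S^2)
        = ((2:ℝ)^(2*p) * D / 2) * S * E⁻¹ := by
      rw [hKdef]; field_simp
    have c2 : K/2 * (Real.exp (-α^2/(2*σ^2))/2)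
        = (1/4) * S * (E * Real.exp (-α^2/(2*σ^2))) := by
      rw [hKdef]; ring
    have hCge : (2:ℝ)^(2*p) * D / 2 + 1/4 ≤ C := by rw [hCdef]; linarith
    calc (2:ℝ)^(2*p)/(2*K) * (t₀^(2*p) + ∑ i, ∫ ω, phi p t₀ (Z ω i) ∂P)
          + K/2 * ∑ i, ∫ ω, psi T (Z ω i) ∂P
        ≤ ((2:ℝ)^(2*p) * D / 2) * S * E⁻¹
          + (1/4) * S * (E * Real.exp (-α^2/(2*σ^2))) := by
          rw [← c1, ← c2]; linarith
      _ = ((2:ℝ)^(2*p) * D / 2 + 1/4) * S * Real.exp (-α^2/(4*σ^2)) := by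
          rw [hEinv, hEmul]; ring
      _ ≤ C * S * Real.exp (-α^2/(4*σ^2)) := by
          apply mul_le_mul_of_nonneg_right _ hexp4.le
          exact mul_le_mul_of_nonneg_right hCge hS.le
  have hCp : C ≤ C^p := by
    calc C = C^(1:ℝ) := (Real.rpow_one C).symm
      _ ≤ C^p := Real.rpow_le_rpow_of_exponent_le hC1 hp
  have hRHSp : (σ * C * L * Real.exp (-α^2 / (4*p*σ^2)))^p
      = C^p * S * Real.exp (-α^2/(4*σ^2)) := by
    have hCpos : (0:ℝ) < C := by linarith
    rw [Real.mul_rpow (by positivity) (Real.exp_pos _).le,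
      Real.mul_rpow (by positivity) hL.le,
      Real.mul_rpow hσ.le hCpos.le,
      ← Real.exp_mul]
    rw [show -α^2 / (4*p*σ^2) * p = -α^2/(4*σ^2) by field_simp]
    rw [hSdef]; ring
  have hfle : (∫ ω, |‖Z ω‖ - ‖Z ω‖ *
      Set.indicator {ω' | ‖Z ω'‖ ≤ T} (fun _ => (1:ℝ)) ω|^p ∂P)
      ≤ (σ * C * L * Real.exp (-α^2 / (4*p*σ^2)))^p := by
    calc (∫ ω, |‖Z ω‖ - ‖Z ω‖ *
        Set.indicator {ω' | ‖Z ω'‖ ≤ T} (fun _ => (1:ℝ)) ω|^p ∂P)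
        ≤ ∫ ω, G ω ∂P := by
          apply integral_mono_of_nonneg
          · exact ae_of_all _ fun ω => Real.rpow_nonneg (abs_nonneg _) _
          · exact hGint
          · exact ae_of_all _ hpt
      _ ≤ C * S * Real.exp (-α^2/(4*σ^2)) := hGle
      _ ≤ C^p * S * Real.exp (-α^2/(4*σ^2)) := by
          apply mul_le_mul_of_nonneg_right _ hexp4.le
          exact mul_le_mul_of_nonneg_right hCp hS.le
      _ = (σ * C * L * Real.exp (-α^2 / (4*p*σ^2)))^p := hRHSp.symm
  have hRHSnn : 0 ≤ σ * C * L * Real.exp (-α^2 / (4*p*σ^2)) := by positivity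
  calc (∫ ω, |‖Z ω‖ - ‖Z ω‖ *
      Set.indicator {ω' | ‖Z ω'‖ ≤ T} (fun _ => (1:ℝ)) ω|^p ∂P)^(1/p)
      ≤ ((σ * C * L * Real.exp (-α^2 / (4*p*σ^2)))^p)^(1/p) := by
        apply Real.rpow_le_rpow _ hfle (by positivity)
        exact integral_nonneg fun ω => Real.rpow_nonneg (abs_nonneg _) _
    _ = σ * C * L * Real.exp (-α^2 / (4*p*σ^2)) := by
        rw [← Real.rpow_mul hRHSnn, mul_one_div_cancel hp0.ne', Real.rpow_one]
end
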